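/- Let O ∈ ℝ^{n×m} have all centered columns Ō_j nonzero, let μ ∈ ℝ^m, let σ ∈ ℝ^m with σ_j > 0 for all j, let N ∈ ℝ^{m×m} be the diagonal matrix with N_{jj} = σ_j√n/‖Ō_j‖, and let T = 𝟙μᵀ ∈ ℝ^{n×m}. Then a matrix Ŝ ∈ ℝ^{n×m} satisfies Mean(Ŝ_j) = μ_j and Var(Ŝ_j) = σ_j² for all j and Corr(Ŝ) = Corr(O) if and only if there exists an orthogonal matrix Q ∈ ℝ^{n×n} such that 𝟙ᵀ(Q Ō N) = 0 and Ŝ = Q Ō N + T. -/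

import Mathlib

/-!
The three conditions say that `Ŝ = S̄ + T` and that the centred matrix `S̄` has the same Gram
matrix `S̄ᵀ S̄` as `Ō N`: the columns of `Ō N` have norms `σ_j √n` and the cosine similarities of
`Ō`, and a Gram matrix records exactly the column norms and their cosines. Two matrices `A`, `B`
with `Aᵀ A = Bᵀ B` differ by an orthogonal factor, `B = Q A`: the map `A x ↦ B x` is a
well-defined isometry of the column space of `A`, which extends to an isometry of `ℝⁿ`.
Conversely `Q Ō N` has the Gram matrix of `Ō N`, and the condition `𝟙ᵀ Q Ō N = 0` makes it
centred, so the means of `Q Ō N + T` are `μ`.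
-/

open Matrix

/-- Euclidean dot product on `ℝ^n`. -/
noncomputable def dotv {n : ℕ} (u v : Fin n → ℝ) : ℝ := ∑ i, u i * v i

/-- Euclidean norm on `ℝ^n`. -/
noncomputable def enormv {n : ℕ} (u : Fin n → ℝ) : ℝ := Real.sqrt (dotv u u)

/-- Arithmetic mean of a vector. -/
noncomputable def meanv {n : ℕ} (f : Fin n → ℝ) : ℝ := (∑ i, f i) / n

/-- Mean-centered vector `f̄ = f - Mean(f)·𝟙`. -/
noncomputable def centv {n : ℕ} (f : Fin n → ℝ) : Fin n → ℝ := fun i => f i - meanv f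

/-- Variance of a vector: `Var(f) = (1/n)‖f̄‖²`. -/
noncomputable def varv {n : ℕ} (f : Fin n → ℝ) : ℝ := (∑ i, (centv f i) ^ 2) / n

/-- The `j`-th column of a matrix. -/
noncomputable def matCol {n m : ℕ} (A : Matrix (Fin n) (Fin m) ℝ) (j : Fin m) : Fin n → ℝ :=
  fun i => A i j

/-- Cosine similarity matrix: `S_c(A)_{jk} = (A_j·A_k)/(‖A_j‖‖A_k‖)`. -/
noncomputable def cosSim {n m : ℕ} (A : Matrix (Fin n) (Fin m) ℝ) : Matrix (Fin m) (Fin m) ℝ :=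
  fun j k => dotv (matCol A j) (matCol A k) / (enormv (matCol A j) * enormv (matCol A k))

/-- Column-wise mean centering of a matrix: `Ā_j = A_j − Mean(A_j)·𝟙`. -/
noncomputable def centM {n m : ℕ} (A : Matrix (Fin n) (Fin m) ℝ) : Matrix (Fin n) (Fin m) ℝ :=
  fun i j => A i j - meanv (matCol A j)

/-- Pearson correlation matrix: cosine similarity of the centered columns. -/
noncomputable def corrM {n m : ℕ} (A : Matrix (Fin n) (Fin m) ℝ) : Matrix (Fin m) (Fin m) ℝ :=
  cosSim (centM A)

/-- Frobenius norm of a matrix. -/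
noncomputable def frob {n m : ℕ} (A : Matrix (Fin n) (Fin m) ℝ) : ℝ :=
  Real.sqrt (∑ i, ∑ j, (A i j) ^ 2)

/-- Given the diagonal entries `σ` of a diagonal matrix `Σ` with nonnegative entries,
`Isig σ` is the diagonal matrix `I_Σ` with `(I_Σ)_{ii} = 1` if `Σ_{ii} > 0` and `0` otherwise. -/
noncomputable def Isig {n : ℕ} (σ : Fin n → ℝ) : Matrix (Fin n) (Fin n) ℝ :=
  Matrix.diagonal (fun i => if 0 < σ i then (1 : ℝ) else 0)

theorem LinearMap.exists_linearIsometry_comp_eq_of_norm_eq {𝕜 X V : Type*} [RCLike 𝕜]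
    [AddCommGroup X] [Module 𝕜 X] [NormedAddCommGroup V] [InnerProductSpace 𝕜 V]
    [FiniteDimensional 𝕜 V] (L M : X →ₗ[𝕜] V) (h : ∀ x, ‖M x‖ = ‖L x‖) :
    ∃ Φ : V →ₗᵢ[𝕜] V, Φ.toLinearMap ∘ₗ L = M := by
  obtain ⟨s, hs⟩ := L.rangeRestrict.exists_rightInverse_of_surjective L.range_rangeRestrict
  have hLs : ∀ y, L (s y) = y := fun y => congr_arg Subtype.val (LinearMap.congr_fun hs y)
  -- `s (L x) - x ∈ ker L`, and `ker L ≤ ker M` since `‖M x‖ = ‖L x‖`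
  have hMs : ∀ x, M (s ⟨L x, L.mem_range_self x⟩) = M x := by
    intro x
    rw [← sub_eq_zero, ← map_sub, ← norm_eq_zero, h, map_sub, hLs, sub_self, norm_zero]
  let φ : LinearMap.range L →ₗᵢ[𝕜] V := ⟨M ∘ₗ s, fun y => by simp [h, hLs]⟩
  refine ⟨φ.extend, LinearMap.ext fun x => ?_⟩
  exact (φ.extend_apply ⟨L x, L.mem_range_self x⟩).trans (hMs x)

theorem Matrix.norm_toEuclideanLin_sq {ι κ : Type*} [Fintype ι] [Fintype κ] [DecidableEq κ]
    (A : Matrix ι κ ℝ) (x : EuclideanSpace ℝ κ) :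
    ‖toEuclideanLin A x‖ ^ 2 = x.ofLp ⬝ᵥ (Aᵀ * A) *ᵥ x.ofLp := by
  rw [← real_inner_self_eq_norm_sq, toLpLin_apply, EuclideanSpace.inner_toLp_toLp, star_trivial,
    ← mulVec_mulVec, dotProduct_mulVec x.ofLp, vecMul_transpose]

theorem Matrix.exists_orthogonal_mul_eq_of_transpose_mul_self_eq {ι κ : Type*} [Fintype ι]
    [DecidableEq ι] [Fintype κ] [DecidableEq κ] {A B : Matrix ι κ ℝ} (h : Aᵀ * A = Bᵀ * B) :
    ∃ Q : Matrix ι ι ℝ, Qᵀ * Q = 1 ∧ Q * A = B := by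
  obtain ⟨Φ, hΦ⟩ := (toEuclideanLin A).exists_linearIsometry_comp_eq_of_norm_eq (toEuclideanLin B)
    fun x => by
      rw [← sq_eq_sq₀ (norm_nonneg _) (norm_nonneg _), norm_toEuclideanLin_sq,
        norm_toEuclideanLin_sq, h]
  set Q := toEuclideanLin.symm Φ.toLinearMap
  have hQ : toEuclideanLin Q = Φ.toLinearMap := LinearEquiv.apply_symm_apply _ _
  refine ⟨Q, toEuclideanLin.injective ?_, toEuclideanLin.injective ?_⟩
  · rw [toLpLin_mul_same, ← conjTranspose_eq_transpose_of_trivial,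
      toEuclideanLin_conjTranspose_eq_adjoint, hQ, LinearIsometry.adjoint_comp_self', toLpLin_one]
  · rw [toLpLin_mul_same, hQ, hΦ]

theorem Matrix.transpose_mul_self_of_orthogonal_mul {ι κ R : Type*} [Fintype ι] [DecidableEq ι]
    [Fintype κ] [CommSemiring R] {Q : Matrix ι ι R} (hQ : Qᵀ * Q = 1) (A : Matrix ι κ R) :
    (Q * A)ᵀ * (Q * A) = Aᵀ * A := by
  rw [transpose_mul, Matrix.mul_assoc, ← Matrix.mul_assoc Qᵀ, hQ, Matrix.one_mul]

theorem Fin.pos_of_fun_ne_zero {α : Type*} [Zero α] {n : ℕ} {u : Fin n → α} (hu : u ≠ 0) :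
    0 < n :=
  (Function.ne_iff.mp hu).choose.pos

section Statistics

variable {n m : ℕ}

theorem dotv_smul_smul (a b : ℝ) (u v : Fin n → ℝ) :
    dotv (a • u) (b • v) = a * b * dotv u v := by
  simp only [dotv, Pi.smul_apply, smul_eq_mul, Finset.mul_sum]
  exact Finset.sum_congr rfl fun i _ => by ring

theorem dotv_self_nonneg (u : Fin n → ℝ) : 0 ≤ dotv u u :=
  Finset.sum_nonneg fun i _ => mul_self_nonneg (u i)

theorem enormv_sq (u : Fin n → ℝ) : enormv u ^ 2 = dotv u u :=
  Real.sq_sqrt (dotv_self_nonneg u)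

theorem enormv_nonneg (u : Fin n → ℝ) : 0 ≤ enormv u :=
  Real.sqrt_nonneg _

theorem enormv_ne_zero {u : Fin n → ℝ} (hu : u ≠ 0) : enormv u ≠ 0 :=
  (Real.sqrt_ne_zero (dotv_self_nonneg u)).mpr (dotProduct_self_eq_zero.not.mpr hu)

theorem enormv_pos {u : Fin n → ℝ} (hu : u ≠ 0) : 0 < enormv u :=
  (enormv_nonneg u).lt_of_ne' (enormv_ne_zero hu)

theorem enormv_smul (a : ℝ) (u : Fin n → ℝ) : enormv (a • u) = |a| * enormv u := by
  rw [enormv, dotv_smul_smul, Real.sqrt_mul (mul_self_nonneg a), Real.sqrt_mul_self_eq_abs, enormv]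

theorem matCol_mul_diagonal (A : Matrix (Fin n) (Fin m) ℝ) (d : Fin m → ℝ) (j : Fin m) :
    matCol (A * diagonal d) j = d j • matCol A j := by
  ext i
  simp [matCol, mul_comm]

theorem matCol_centM (A : Matrix (Fin n) (Fin m) ℝ) (j : Fin m) :
    matCol (centM A) j = centv (matCol A j) :=
  rfl

theorem transpose_mul_self_apply (A : Matrix (Fin n) (Fin m) ℝ) (j k : Fin m) :
    (Aᵀ * A) j k = dotv (matCol A j) (matCol A k) :=
  rfl

theorem dotv_eq_cosSim_mul (A : Matrix (Fin n) (Fin m) ℝ) {j k : Fin m}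
    (hj : enormv (matCol A j) ≠ 0) (hk : enormv (matCol A k) ≠ 0) :
    dotv (matCol A j) (matCol A k) = cosSim A j k * (enormv (matCol A j) * enormv (matCol A k)) :=
  (div_mul_cancel₀ _ (mul_ne_zero hj hk)).symm

theorem cosSim_mul_diagonal_of_pos (A : Matrix (Fin n) (Fin m) ℝ) {d : Fin m → ℝ}
    (hd : ∀ j, 0 < d j) : cosSim (A * diagonal d) = cosSim A := by
  ext j k
  simp only [cosSim, matCol_mul_diagonal, dotv_smul_smul, enormv_smul, abs_of_pos (hd _)]
  rw [mul_mul_mul_comm, mul_div_mul_left _ _ (mul_pos (hd j) (hd k)).ne']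

theorem transpose_mul_self_eq_iff {A B : Matrix (Fin n) (Fin m) ℝ} (hA : ∀ j, matCol A j ≠ 0) :
    Aᵀ * A = Bᵀ * B ↔
      (∀ j, enormv (matCol B j) = enormv (matCol A j)) ∧ cosSim B = cosSim A := by
  constructor
  · intro h
    have hdot (j k : Fin m) : dotv (matCol B j) (matCol B k) = dotv (matCol A j) (matCol A k) := by
      simpa only [transpose_mul_self_apply] using (congr_fun (congr_fun h j) k).symm
    exact ⟨fun j => by simp only [enormv, hdot],
      funext₂ fun j k => by simp only [cosSim, enormv, hdot]⟩
  · rintro ⟨hnorm, hcos⟩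
    have hB (j : Fin m) : enormv (matCol B j) ≠ 0 := hnorm j ▸ enormv_ne_zero (hA j)
    ext j k
    rw [transpose_mul_self_apply, transpose_mul_self_apply,
      dotv_eq_cosSim_mul A (enormv_ne_zero (hA j)) (enormv_ne_zero (hA k)),
      dotv_eq_cosSim_mul B (hB j) (hB k), hcos, hnorm, hnorm]

theorem sum_centv (f : Fin n → ℝ) : ∑ i, centv f i = 0 := by
  rcases Nat.eq_zero_or_pos n with rfl | hn
  · simp
  · simp only [centv, meanv, Finset.sum_sub_distrib, Finset.sum_const, Finset.card_univ,
      Fintype.card_fin, nsmul_eq_mul]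
    rw [mul_div_cancel₀ _ (by positivity), sub_self]

theorem meanv_add_const (hn : n ≠ 0) (f : Fin n → ℝ) (c : ℝ) :
    meanv (fun i => f i + c) = meanv f + c := by
  simp only [meanv, Finset.sum_add_distrib, Finset.sum_const, Finset.card_univ, Fintype.card_fin,
    nsmul_eq_mul]
  rw [add_div, mul_div_cancel_left₀ _ (Nat.cast_ne_zero.mpr hn)]

theorem varv_eq_enormv_centv_sq_div (f : Fin n → ℝ) : varv f = enormv (centv f) ^ 2 / n := by
  rw [varv, enormv_sq, dotv]
  simp only [sq]

theorem varv_eq_sq_iff (hn : n ≠ 0) (f : Fin n → ℝ) {s : ℝ} (hs : 0 ≤ s) :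
    varv f = s ^ 2 ↔ enormv (centv f) = s * √n := by
  rw [varv_eq_enormv_centv_sq_div, div_eq_iff (Nat.cast_ne_zero.mpr hn),
    ← sq_eq_sq₀ (enormv_nonneg _) (by positivity), mul_pow, Real.sq_sqrt (Nat.cast_nonneg _)]

theorem vecMul_one_eq_zero_iff (B : Matrix (Fin n) (Fin m) ℝ) :
    vecMul (fun _ => 1) B = 0 ↔ ∀ j, ∑ i, B i j = 0 := by
  simp [funext_iff, vecMul, dotProduct]

theorem meanv_matCol_add_const {B T : Matrix (Fin n) (Fin m) ℝ} {μ : Fin m → ℝ} (hn : n ≠ 0)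
    (hB : ∀ j, ∑ i, B i j = 0) (hT : T = fun _ j => μ j) (j : Fin m) :
    meanv (matCol (B + T) j) = μ j := by
  subst hT
  rw [show matCol (B + _) j = fun i => matCol B j i + μ j from rfl, meanv_add_const hn, meanv]
  simp [matCol, hB j]

theorem centM_add_const {B T : Matrix (Fin n) (Fin m) ℝ} {μ : Fin m → ℝ}
    (hB : ∀ j, ∑ i, B i j = 0) (hT : T = fun _ j => μ j) : centM (B + T) = B := by
  ext i j
  rw [centM, meanv_matCol_add_const i.pos.ne' hB hT, hT]
  exact add_sub_cancel_right (B i j) (μ j)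

theorem centM_add_eq_self_of_meanv_eq {S T : Matrix (Fin n) (Fin m) ℝ} {μ : Fin m → ℝ}
    (hS : ∀ j, meanv (matCol S j) = μ j) (hT : T = fun _ j => μ j) : centM S + T = S := by
  ext i j
  rw [hT]
  show S i j - meanv (matCol S j) + μ j = S i j
  rw [hS, sub_add_cancel]

theorem varv_and_corrM_eq_iff_transpose_mul_self_eq {A S : Matrix (Fin n) (Fin m) ℝ}
    {σ : Fin m → ℝ} (hσ : ∀ j, 0 ≤ σ j) (hA : ∀ j, matCol A j ≠ 0)
    (hnorm : ∀ j, enormv (matCol A j) = σ j * √n) :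
    ((∀ j, varv (matCol S j) = σ j ^ 2) ∧ corrM S = cosSim A) ↔
      Aᵀ * A = (centM S)ᵀ * centM S := by
  rw [transpose_mul_self_eq_iff hA, corrM]
  refine and_congr (forall_congr' fun j => ?_) Iff.rfl
  rw [hnorm, matCol_centM, varv_eq_sq_iff (Fin.pos_of_fun_ne_zero (hA j)).ne' _ (hσ j)]

end Statistics

/-- Characterization of all matrices with prescribed means `μ`, variances
`σ²` and Pearson correlation matrix equal to that of `O`: they are exactly the matrices
of the form `Q Ō N + T` with `Q` orthogonal and `𝟙ᵀ(Q Ō N) = 0`. -/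
theorem mean_var_corr_iff_orthogonal_form {n m : ℕ}
    (O : Matrix (Fin n) (Fin m) ℝ) (hO : ∀ j, matCol (centM O) j ≠ 0)
    (μ σ : Fin m → ℝ) (hσ : ∀ j, 0 < σ j)
    (N : Matrix (Fin m) (Fin m) ℝ)
    (hN : N = Matrix.diagonal (fun j => σ j * Real.sqrt n / enormv (matCol (centM O) j)))
    (T : Matrix (Fin n) (Fin m) ℝ) (hT : T = fun _ j => μ j)
    (Shat : Matrix (Fin n) (Fin m) ℝ) :
    ((∀ j, meanv (matCol Shat j) = μ j) ∧ (∀ j, varv (matCol Shat j) = (σ j) ^ 2) ∧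
      corrM Shat = corrM O) ↔
    ∃ Q : Matrix (Fin n) (Fin n) ℝ, Qᵀ * Q = 1 ∧
      Matrix.vecMul (fun _ => (1 : ℝ)) (Q * centM O * N) = 0 ∧
      Shat = Q * centM O * N + T := by
  have hn (j : Fin m) : n ≠ 0 := (Fin.pos_of_fun_ne_zero (hO j)).ne'
  have hd (j : Fin m) : 0 < σ j * √n / enormv (matCol (centM O) j) := by
    have := hσ j
    have := Nat.pos_of_ne_zero (hn j)
    have := enormv_pos (hO j)
    positivity
  have hA (j : Fin m) : matCol (centM O * N) j ≠ 0 := by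
    rw [hN, matCol_mul_diagonal]
    exact smul_ne_zero (hd j).ne' (hO j)
  have hnorm (j : Fin m) : enormv (matCol (centM O * N) j) = σ j * √n := by
    rw [hN, matCol_mul_diagonal, enormv_smul, abs_of_pos (hd j),
      div_mul_cancel₀ _ (enormv_ne_zero (hO j))]
  have hcorr : corrM O = cosSim (centM O * N) := by
    rw [hN, cosSim_mul_diagonal_of_pos _ hd, corrM]
  have key (S : Matrix (Fin n) (Fin m) ℝ) :=
    varv_and_corrM_eq_iff_transpose_mul_self_eq (S := S) (fun j => (hσ j).le) hA hnorm
  simp only [Matrix.mul_assoc, hcorr, vecMul_one_eq_zero_iff]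
  constructor
  · rintro ⟨hmean, hvar_corr⟩
    obtain ⟨Q, hQ, hQA⟩ :=
      exists_orthogonal_mul_eq_of_transpose_mul_self_eq ((key Shat).1 hvar_corr)
    refine ⟨Q, hQ, hQA ▸ fun j => sum_centv (matCol Shat j), ?_⟩
    rw [hQA, centM_add_eq_self_of_meanv_eq hmean hT]
  · rintro ⟨Q, hQ, hsum, rfl⟩
    refine ⟨fun j => meanv_matCol_add_const (hn j) hsum hT j, (key _).2 ?_⟩
    rw [centM_add_const hsum hT, transpose_mul_self_of_orthogonal_mul hQ]
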